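/- Let ε ∈ (0, 1/4). Let f0(λ) = (2 - 2cos λ)^{-d0} exp(w0(λ)) and f(λ) = (2 - 2cos λ)^{-d} exp(w(λ)) on (0,π), where |d - d0| ≤ ε and |w(λ) - w0(λ)| ≤ ε for all λ. Then h(f, f0) = (1/2π)∫_0^π (f/f0 + f0/f - 2) dλ ≤ 7ε. -/

import Mathlib

/-!
Write `g = 2 - 2 cos λ` and `δ = |d - d0|`. Up to swapping `f` and `f0`, one of the quotients
`f / f0`, `f0 / f` is `g ^ δ * exp (±(w - w0)) ≤ 4 ^ ε * exp ε`, because `g ≤ 4`, and the other is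
`g ^ (-δ) * exp (∓(w - w0)) ≤ 3 ^ ε * exp ε * λ ^ (-2δ)`, because `g ≥ λ² / 3` on `(0, π)`.
Since `∫₀^π λ ^ (-2δ) ≤ π / (1 - 2ε)`, the integral is at most
`π (3 ^ ε * exp ε / (1 - 2ε) + 4 ^ ε * exp ε - 2)`, and a third-order Taylor bound for
`4 ^ ε * exp ε = exp (ε (1 + log 4))` shows that the bracket is at most `14ε`.
-/

open Real MeasureTheory Set

lemma sq_div_three_le_two_sub_two_mul_cos {x : ℝ} (hx : |x| ≤ π) :
    x ^ 2 / 3 ≤ 2 - 2 * cos x := by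
  have hcos := cos_le_one_sub_mul_cos_sq hx
  have hπ : π ^ 2 ≤ 12 := by nlinarith [pi_lt_d2, pi_pos]
  have : x ^ 2 / 3 ≤ 2 * (2 / π ^ 2 * x ^ 2) := by
    rw [show 2 * (2 / π ^ 2 * x ^ 2) = 4 * x ^ 2 / π ^ 2 by ring, le_div_iff₀ (by positivity)]
    nlinarith [sq_nonneg x]
  linarith

lemma two_sub_two_mul_cos_rpow_le {x δ ε : ℝ} (hδ : 0 ≤ δ) (hδε : δ ≤ ε) :
    (2 - 2 * cos x) ^ δ ≤ 4 ^ ε :=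
  calc (2 - 2 * cos x) ^ δ ≤ 4 ^ δ :=
        rpow_le_rpow (by linarith [cos_le_one x]) (by linarith [neg_one_le_cos x]) hδ
    _ ≤ 4 ^ ε := rpow_le_rpow_of_exponent_le (by norm_num) hδε

lemma two_sub_two_mul_cos_rpow_neg_le {x δ ε : ℝ} (hx : x ∈ Ioo 0 π) (hδ : 0 ≤ δ)
    (hδε : δ ≤ ε) : (2 - 2 * cos x) ^ (-δ) ≤ 3 ^ ε * x ^ (-(2 * δ)) := by
  have hx0 := hx.1
  have hlb := sq_div_three_le_two_sub_two_mul_cos (abs_le.2 ⟨by linarith [hx.1, pi_pos], hx.2.le⟩)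
  calc (2 - 2 * cos x) ^ (-δ) ≤ (x ^ 2 / 3) ^ (-δ) :=
        rpow_le_rpow_of_nonpos (by positivity) hlb (by linarith)
    _ = 3 ^ δ * x ^ (-(2 * δ)) := by
        rw [div_rpow (by positivity) (by norm_num), rpow_neg (by norm_num : (0 : ℝ) ≤ 3),
          div_inv_eq_mul, ← rpow_natCast, ← rpow_mul hx0.le]
        push_cast
        ring_nf
    _ ≤ 3 ^ ε * x ^ (-(2 * δ)) := by gcongr; norm_num

lemma rpow_mul_exp_div_add_le {x a b u v ε : ℝ} (hx : x ∈ Ioo 0 π) (hab : |a - b| ≤ ε)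
    (huv : |u - v| ≤ ε) :
    (2 - 2 * cos x) ^ a * exp u / ((2 - 2 * cos x) ^ b * exp v)
      + (2 - 2 * cos x) ^ b * exp v / ((2 - 2 * cos x) ^ a * exp u)
      ≤ 3 ^ ε * exp ε * x ^ (-(2 * |a - b|)) + 4 ^ ε * exp ε := by
  wlog hba : b ≤ a generalizing a b u v
  · rw [add_comm, abs_sub_comm a b]
    exact this (by rwa [abs_sub_comm]) (by rwa [abs_sub_comm]) (by linarith)
  set g := 2 - 2 * cos x
  have hg : 0 < g := by
    have := sq_div_three_le_two_sub_two_mul_cos (abs_le.2 ⟨by linarith [hx.1, pi_pos], hx.2.le⟩)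
    nlinarith [hx.1]
  have hexp : exp (u - v) ≤ exp ε ∧ exp (v - u) ≤ exp ε := by
    constructor <;> apply exp_le_exp.2 <;> linarith [abs_le.1 huv]
  have hpq : g ^ a * exp u / (g ^ b * exp v) = g ^ (a - b) * exp (u - v) := by
    rw [rpow_sub hg, exp_sub]; ring
  have hqp : g ^ b * exp v / (g ^ a * exp u) = g ^ (-(a - b)) * exp (v - u) := by
    rw [rpow_neg hg.le, rpow_sub hg, inv_div, exp_sub]; ring
  rw [hpq, hqp, abs_of_nonneg (sub_nonneg.2 hba)]
  have hpq_le : g ^ (a - b) * exp (u - v) ≤ 4 ^ ε * exp ε :=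
    mul_le_mul (two_sub_two_mul_cos_rpow_le (sub_nonneg.2 hba) (abs_le.1 hab).2) hexp.1
      (exp_pos _).le (by positivity)
  have hqp_le : g ^ (-(a - b)) * exp (v - u) ≤ 3 ^ ε * x ^ (-(2 * (a - b))) * exp ε :=
    mul_le_mul (two_sub_two_mul_cos_rpow_neg_le hx (sub_nonneg.2 hba) (abs_le.1 hab).2) hexp.2
      (exp_pos _).le (mul_nonneg (by positivity) (rpow_nonneg hx.1.le _))
  linarith

lemma setIntegral_Ioo_rpow_neg_le {a s t : ℝ} (ha : 1 ≤ a) (hs : 0 ≤ s) (hst : s ≤ t)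
    (ht : t < 1) : ∫ x in Ioo 0 a, x ^ (-s) ≤ a / (1 - t) := by
  rw [← integral_Ioc_eq_integral_Ioo, ← intervalIntegral.integral_of_le (by linarith),
    integral_rpow (Or.inl (by linarith)), zero_rpow (by linarith), sub_zero,
    show -s + 1 = 1 - s by ring]
  apply div_le_div₀ (by linarith) _ (by linarith) (by linarith)
  simpa using rpow_le_rpow_of_exponent_le ha (by linarith : 1 - s ≤ 1)

lemma setIntegral_Ioo_le_of_le_mul_rpow_neg_add {g : ℝ → ℝ} {a s t A C : ℝ} (ha : 1 ≤ a)
    (hs : 0 ≤ s) (hst : s ≤ t) (ht : t < 1) (hA : 0 ≤ A) (hg : IntegrableOn g (Ioo 0 a))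
    (hle : ∀ x ∈ Ioo 0 a, g x ≤ A * x ^ (-s) + C) :
    ∫ x in Ioo 0 a, g x ≤ A * (a / (1 - t)) + C * a := by
  have hrpow : IntegrableOn (fun x ↦ A * x ^ (-s)) (Ioo 0 a) :=
    ((intervalIntegrable_iff_integrableOn_Ioo_of_le (by linarith)).1
      (intervalIntegral.intervalIntegrable_rpow' (by linarith))).const_mul A
  have hC : IntegrableOn (fun _ ↦ C) (Ioo 0 a) := integrableOn_const measure_Ioo_lt_top.ne
  calc ∫ x in Ioo 0 a, g x ≤ ∫ x in Ioo 0 a, (A * x ^ (-s) + C) :=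
        setIntegral_mono_on hg (hrpow.add hC) measurableSet_Ioo hle
    _ = A * (∫ x in Ioo 0 a, x ^ (-s)) + C * a := by
        rw [integral_add hrpow hC, integral_const_mul, setIntegral_const,
          volume_real_Ioo_of_le (by linarith), sub_zero, smul_eq_mul, mul_comm a]
    _ ≤ A * (a / (1 - t)) + C * a := by
        gcongr
        exact setIntegral_Ioo_rpow_neg_le ha hs hst ht

lemma three_rpow_mul_exp_div_add_four_rpow_mul_exp_le {ε : ℝ} (h0 : 0 ≤ ε) (h1 : ε ≤ 1 / 4) :
    3 ^ ε * exp ε / (1 - 2 * ε) + 4 ^ ε * exp ε - 2 ≤ 14 * ε := by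
  have h34 : 3 ^ ε * exp ε / (1 - 2 * ε) ≤ 4 ^ ε * exp ε / (1 - 2 * ε) := by
    gcongr
    · linarith
    · norm_num
  suffices 4 ^ ε * exp ε / (1 - 2 * ε) + 4 ^ ε * exp ε - 2 ≤ 14 * ε by linarith
  have hlog : log 4 < 1.3863 := by
    rw [show (4 : ℝ) = 2 ^ 2 by norm_num, log_pow]
    push_cast
    linarith [log_two_lt_d9]
  have hB : 4 ^ ε * exp ε = exp (ε * (1 + log 4)) := by
    rw [rpow_def_of_pos (by norm_num), ← exp_add]; ring_nf
  set t := ε * (1 + log 4)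
  have ht0 : 0 ≤ t := mul_nonneg h0 (by linarith [log_pos (by norm_num : (1 : ℝ) < 4)])
  have ht : t ≤ 2.3863 * ε := by nlinarith
  have hexp := exp_bound' ht0 (by linarith) (n := 3) (by norm_num)
  simp only [Finset.sum_range_succ, Finset.sum_range_zero, Nat.factorial] at hexp
  norm_num at hexp
  have hE : exp t ≤ 1 + 3.29 * ε := by
    nlinarith [mul_nonneg ht0 ht0, mul_nonneg (mul_nonneg ht0 ht0) ht0]
  rw [hB, div_add' _ _ _ (by linarith), div_sub' (by linarith), div_le_iff₀ (by linarith)]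
  nlinarith

open Real MeasureTheory in
theorem fexp_h_continuity
    (ε d d0 : ℝ) (w w0 f f0 : ℝ → ℝ)
    (hε : ε ∈ Set.Ioo (0 : ℝ) (1 / 4))
    (hf0 : ∀ x : ℝ, f0 x = (2 - 2 * Real.cos x) ^ (-d0) * Real.exp (w0 x))
    (hf : ∀ x : ℝ, f x = (2 - 2 * Real.cos x) ^ (-d) * Real.exp (w x))
    (hd : |d - d0| ≤ ε) (hw : ∀ x : ℝ, |w x - w0 x| ≤ ε) :
    (1 / (2 * π)) * ∫ x in Set.Ioo (0 : ℝ) π,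
        (f x / f0 x + f0 x / f x - 2) ≤ 7 * ε := by
  obtain ⟨hε0, hε4⟩ := hε
  have hδ : |-d - -d0| ≤ ε := by rwa [neg_sub_neg, abs_sub_comm]
  have hpt : ∀ x ∈ Ioo 0 π, f x / f0 x + f0 x / f x - 2
      ≤ 3 ^ ε * exp ε * x ^ (-(2 * |-d - -d0|)) + (4 ^ ε * exp ε - 2) := by
    intro x hx
    rw [hf, hf0]
    linarith [rpow_mul_exp_div_add_le hx hδ (hw x)]
  by_cases hg : IntegrableOn (fun x ↦ f x / f0 x + f0 x / f x - 2) (Ioo 0 π)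
  · have hI := setIntegral_Ioo_le_of_le_mul_rpow_neg_add (t := 2 * ε)
      (by linarith [pi_gt_three]) (by positivity) (by linarith) (by linarith) (by positivity) hg hpt
    calc (1 / (2 * π)) * ∫ x in Ioo 0 π, (f x / f0 x + f0 x / f x - 2)
        ≤ (1 / (2 * π)) * (3 ^ ε * exp ε * (π / (1 - 2 * ε)) + (4 ^ ε * exp ε - 2) * π) := by
          gcongr
      _ = (3 ^ ε * exp ε / (1 - 2 * ε) + 4 ^ ε * exp ε - 2) / 2 := by field_simp; ring
      _ ≤ 7 * ε := by
          linarith [three_rpow_mul_exp_div_add_four_rpow_mul_exp_le hε0.le hε4.le]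
  · rw [integral_undef hg, mul_zero]
    positivity
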